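/- arXiv:1506.00719 — 5 statements merged into one kernel-verified Lean document; each statement's English description precedes it below -/
import Mathlib

section
/- Let p be a prime, let 𝔽 be a finite field of characteristic p, take R = 𝔽, and assume the strong genericity hypothesis: a_0 < a_1 < a_2, a_1 − a_0 > 3, a_2 − a_1 > 3 and a_2 − a_0 < p − 4. Let W be a lower triangular unipotent matrix with descent data (W_{ii} = 1 and W_{ij} = 0 for j > i), let V = W·Diag(1, u^e, u^{2e}), let f_0, f_1, f_2 ∈ M = S̄³ be the columns of V with respect to the standard basis (e_0, e_1, e_2), and let Fil ⊆ M be the S̄-submodule generated by f_0, f_1, f_2. Let A be an invertible lower triangular matrix with descent data and let φ_2 : Fil → M be an additive map with φ_2(s·x) = φ(s)·φ_2(x) for all s ∈ S̄, x ∈ Fil, and φ_2(f_j) = Σ_i A_{ij} e_i for all j. Then there exist an invertible matrix with descent data C ∈ GL_3(S̄), elements v_{1,0}, v_{2,0}, v'_{2,0}, v_{2,1} ∈ 𝔽 and α_0, α_1, α_2 ∈ 𝔽^× such that, setting ẽ_j = Σ_i C_{ij} e_i, the elements f̃_0 = ẽ_0 + u^{[a_1−a_0]} v_{1,0} ẽ_1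 + u^{[a_2−a_0]}(v_{2,0} + u^e v'_{2,0}) ẽ_2, f̃_1 = u^e ẽ_1 + u^{e+[a_2−a_1]} v_{2,1} ẽ_2 and f̃_2 = u^{2e} ẽ_2 all lie in Fil, generate Fil as an S̄-module, and satisfy φ_2(f̃_i) = α_i ẽ_i for i = 0, 1, 2. -/
/-!
Put `t = u^e`, so that `φ t = u^{ep} = 0`: on `S̄₀ = 𝔽[t]` the Frobenius only sees constant terms,
and `φ (u^β w) = u^β t^β w(0)`. Take the new generators `f̃ = f·X` with `X` lower triangular with
diagonal `A_{ii}`, and the new basis `C = A·φ(X)·Diag(α)⁻¹` with `α_i` the constant term of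
`A_{ii}`. Then `φ₂(f̃_i) = α_i ẽ_i` holds by construction, and the ordinary form `f̃ = ẽ·N` amounts
to one equation `t^k X_{ij} = G + A_{ii}(φ(X_{ij}) α_j⁻¹ + u^β n)` for each entry below the
diagonal, with `β = [a_i − a_j]`, `k = 1` next to the diagonal and `k = 2` in the corner. The
constants in `n` are chosen to make `G + A_{ii} u^β n` divisible by `u^β t^k`. Genericity gives
`β > k`, so `φ(X_{ij})` is divisible by `u^β t^{k+1}` and only depends on the constant term of
`X_{ij} / u^β`, which the equation determines in advance: it can then be solved explicitly.
-/

open Polynomial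

/-- `S̄ = R[u]/(u^{ep})` with `e = p - 1`, realized as `R[X]/(X^{(p-1)p})`. -/
noncomputable def Sbar (p : ℕ) (R : Type*) [CommRing R] : Type _ :=
  R[X] ⧸ Ideal.span ({(X : R[X]) ^ ((p - 1) * p)} : Set R[X])

noncomputable instance (p : ℕ) (R : Type*) [CommRing R] : CommRing (Sbar p R) :=
  inferInstanceAs (CommRing (R[X] ⧸ Ideal.span ({(X : R[X]) ^ ((p - 1) * p)} : Set R[X])))

noncomputable instance (p : ℕ) (R : Type*) [CommRing R] : Algebra R (Sbar p R) :=
  inferInstanceAs (Algebra R (R[X] ⧸ Ideal.span ({(X : R[X]) ^ ((p - 1) * p)} : Set R[X])))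

/-- The image `u` of the variable `X` in `S̄`. -/
noncomputable def Sbar.u (p : ℕ) (R : Type*) [CommRing R] : Sbar p R :=
  (Ideal.Quotient.mk (Ideal.span ({(X : R[X]) ^ ((p - 1) * p)} : Set R[X])) X :
    R[X] ⧸ Ideal.span ({(X : R[X]) ^ ((p - 1) * p)} : Set R[X]))

open Matrix

section Columns

variable {l m m' n R : Type*} [Fintype n] [CommRing R]

theorem Matrix.col_mul (M : Matrix m n R) (N : Matrix n l R) (j : l) :
    (M * N).col j = ∑ k, N k j • M.col k := by
  ext i
  simp [mul_apply, mul_comm]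

theorem Matrix.span_range_col_mul_of_isUnit [DecidableEq n] (M : Matrix m n R)
    {X : Matrix n n R} (hX : IsUnit X) :
    Submodule.span R (Set.range (M * X).col) = Submodule.span R (Set.range M.col) := by
  rw [← range_mulVecLin, ← range_mulVecLin, mulVecLin_mul, LinearMap.range_comp_of_range_eq_top]
  exact LinearMap.range_eq_top.2 (mulVec_surjective_iff_isUnit.2 hX)

theorem Matrix.col_mul_mem {N : Submodule R (m → R)} {V : Matrix m n R} (hV : ∀ k, V.col k ∈ N)
    (X : Matrix n l R) (j : l) : (V * X).col j ∈ N := by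
  rw [col_mul]
  exact sum_mem fun k _ ↦ N.smul_mem _ (hV k)

theorem AddMonoidHom.map_col_mul {N : Submodule R (m → R)} {V : Matrix m n R}
    (hV : ∀ k, V.col k ∈ N) {g : N →+ (m' → R)} {σ : R → R}
    (hg : ∀ (s : R) (x : N), g (s • x) = σ s • g x) {A : Matrix m' n R}
    (hA : ∀ k, g ⟨V.col k, hV k⟩ = A.col k) (X : Matrix n l R) (j : l) :
    g ⟨(V * X).col j, col_mul_mem hV X j⟩ = (A * X.map σ).col j := by
  have h : (⟨(V * X).col j, col_mul_mem hV X j⟩ : N) = ∑ k, X k j • ⟨V.col k, hV k⟩ := by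
    ext1
    simp [col_mul]
  rw [h, map_sum, col_mul]
  simp only [hg, hA, map_apply]

theorem Matrix.col_mul_diagonal [DecidableEq n] (M : Matrix m n R) (d : n → R) (j : n) :
    (M * diagonal d).col j = d j • M.col j := by
  ext i
  simp [mul_comm]

theorem Matrix.isUnit_iff_forall_isUnit_of_isLowerTriangular [LinearOrder n] [DecidableEq n]
    {M : Matrix n n R} (hM : M.IsLowerTriangular) : IsUnit M ↔ ∀ i, IsUnit (M i i) := by
  rw [isUnit_iff_isUnit_det, det_of_isLowerTriangular M hM, IsUnit.prod_univ_iff]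

end Columns

theorem Set.range_fin_three {α : Type*} (g : Fin 3 → α) : Set.range g = {g 0, g 1, g 2} := by
  ext
  simp [Fin.exists_fin_succ, eq_comm]

section ConstantTerm

variable {K R : Type*} [CommRing R] {t : R}

theorem exists_eq_algebraMap_add_mul_of_mem_adjoin [CommRing K] [Algebra K R] {w : R}
    (hw : w ∈ Algebra.adjoin K {t}) :
    ∃ c : K, ∃ w' ∈ Algebra.adjoin K {t}, w = algebraMap K R c + t * w' := by
  rw [Algebra.adjoin_singleton_eq_range_aeval] at hw ⊢
  obtain ⟨P, rfl⟩ := hw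
  refine ⟨P.coeff 0, aeval t P.divX, ⟨P.divX, rfl⟩, ?_⟩
  conv_lhs => rw [← X_mul_divX_add P]
  simp only [AlgHom.toRingHom_eq_coe, RingHom.coe_coe, map_add, map_mul, aeval_X, aeval_C]
  exact add_comm _ _

theorem map_eq_algebraMap_of_mem_adjoin [CommRing K] [Algebra K R] {φ : R →ₐ[K] R}
    (hφt : φ t = 0) {w : R} (hw : w ∈ Algebra.adjoin K {t}) :
    ∃ c : K, φ w = algebraMap K R c := by
  obtain ⟨c, w', -, rfl⟩ := exists_eq_algebraMap_add_mul_of_mem_adjoin hw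
  exact ⟨c, by simp [hφt]⟩

theorem exists_add_mul_algebraMap_eq_mul [Field K] [Algebra K R] {b : K} (hb : b ≠ 0) {g d : R}
    (hg : g ∈ Algebra.adjoin K {t}) (hd : d ∈ Algebra.adjoin K {t}) :
    ∃ v : K, ∃ g' ∈ Algebra.adjoin K {t},
      g + (algebraMap K R b + t * d) * algebraMap K R v = t * g' := by
  obtain ⟨c, g₁, hg₁, rfl⟩ := exists_eq_algebraMap_add_mul_of_mem_adjoin hg
  have hbv : algebraMap K R b * algebraMap K R (-c / b) = -algebraMap K R c := by
    rw [← map_mul, mul_div_cancel₀ _ hb, map_neg]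
  refine ⟨-c / b, g₁ + d * algebraMap K R (-c / b),
    add_mem hg₁ (mul_mem hd (Subalgebra.algebraMap_mem _ _)), ?_⟩
  linear_combination hbv

theorem exists_add_mul_eq_sq_mul [Field K] [Algebra K R] {b : K} (hb : b ≠ 0) {g d : R}
    (hg : g ∈ Algebra.adjoin K {t}) (hd : d ∈ Algebra.adjoin K {t}) :
    ∃ v v' : K, ∃ g' ∈ Algebra.adjoin K {t},
      g + (algebraMap K R b + t * d) * (algebraMap K R v + t * algebraMap K R v') = t ^ 2 * g' := by
  obtain ⟨v, g₁, hg₁, h₁⟩ := exists_add_mul_algebraMap_eq_mul hb hg hd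
  obtain ⟨v', g₂, hg₂, h₂⟩ := exists_add_mul_algebraMap_eq_mul hb hg₁ hd
  exact ⟨v, v', g₂, hg₂, by linear_combination h₁ + t * h₂⟩

end ConstantTerm

section DescentData

variable {K R : Type*} [CommRing K] [CommRing R] [Algebra K R] {u : R} {q : ℕ}

/-- `x ∈ u ^ β • K[u ^ q]`: the shape of the `(i, j)` entry of a matrix with descent data, for
`β = [a_i - a_j]` and `q = e`. -/
def IsDescentEntry (K : Type*) [CommRing K] [Algebra K R] (u : R) (q β : ℕ) (x : R) : Prop :=
  ∃ w ∈ Algebra.adjoin K ({u ^ q} : Set R), x = u ^ β * w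

def IsDescentMatrix {n : Type*} (K : Type*) [CommRing K] [Algebra K R] (u : R) (q : ℕ)
    (br : n → n → ℕ) (M : Matrix n n R) : Prop :=
  ∀ i j, IsDescentEntry K u q (br i j) (M i j)

namespace IsDescentEntry

variable {β : ℕ} {x y : R}

theorem zero : IsDescentEntry K u q β 0 :=
  ⟨0, zero_mem _, (mul_zero _).symm⟩

theorem of_mem_adjoin (hx : x ∈ Algebra.adjoin K ({u ^ q} : Set R)) :
    IsDescentEntry K u q 0 x :=
  ⟨x, hx, (one_mul x).symm.trans (by rw [pow_zero])⟩

theorem mem_adjoin (hx : IsDescentEntry K u q 0 x) : x ∈ Algebra.adjoin K ({u ^ q} : Set R) := by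
  obtain ⟨w, hw, rfl⟩ := hx
  rwa [pow_zero, one_mul]

theorem add (hx : IsDescentEntry K u q β x) (hy : IsDescentEntry K u q β y) :
    IsDescentEntry K u q β (x + y) := by
  obtain ⟨w, hw, rfl⟩ := hx
  obtain ⟨w', hw', rfl⟩ := hy
  exact ⟨w + w', add_mem hw hw', (mul_add _ _ _).symm⟩

theorem neg (hx : IsDescentEntry K u q β x) : IsDescentEntry K u q β (-x) := by
  obtain ⟨w, hw, rfl⟩ := hx
  exact ⟨-w, neg_mem hw, (mul_neg _ _).symm⟩

theorem sub (hx : IsDescentEntry K u q β x) (hy : IsDescentEntry K u q β y) :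
    IsDescentEntry K u q β (x - y) :=
  sub_eq_add_neg x y ▸ hx.add hy.neg

theorem sum {ι : Type*} {s : Finset ι} {f : ι → R} (hf : ∀ i ∈ s, IsDescentEntry K u q β (f i)) :
    IsDescentEntry K u q β (∑ i ∈ s, f i) := by
  classical
  induction s using Finset.induction_on with
  | empty => exact zero
  | insert i s hi ih =>
    rw [Finset.sum_insert hi]
    exact (hf i (Finset.mem_insert_self i s)).add
      (ih fun j hj ↦ hf j (Finset.mem_insert_of_mem hj))

theorem mul {β₁ β₂ m : ℕ} (hx : IsDescentEntry K u q β₁ x) (hy : IsDescentEntry K u q β₂ y)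
    (h : β₁ + β₂ = β + m * q) : IsDescentEntry K u q β (x * y) := by
  obtain ⟨w, hw, rfl⟩ := hx
  obtain ⟨w', hw', rfl⟩ := hy
  refine ⟨(u ^ q) ^ m * (w * w'),
    mul_mem (pow_mem (Algebra.self_mem_adjoin_singleton K _) _) (mul_mem hw hw'), ?_⟩
  calc u ^ β₁ * w * (u ^ β₂ * w') = u ^ (β₁ + β₂) * (w * w') := by ring
    _ = u ^ β * ((u ^ q) ^ m * (w * w')) := by rw [h, pow_add, mul_comm m, pow_mul]; ring

theorem mul_left {s : R} (hs : s ∈ Algebra.adjoin K ({u ^ q} : Set R))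
    (hx : IsDescentEntry K u q β x) : IsDescentEntry K u q β (s * x) :=
  (of_mem_adjoin hs).mul hx (m := 0) (by ring)

theorem map {φ : R →ₐ[K] R} (hφu : φ u = u ^ (q + 1)) (hφt : φ (u ^ q) = 0)
    (hx : IsDescentEntry K u q β x) : IsDescentEntry K u q β (φ x) := by
  obtain ⟨w, hw, rfl⟩ := hx
  obtain ⟨c, hc⟩ := map_eq_algebraMap_of_mem_adjoin hφt hw
  refine ⟨(u ^ q) ^ β * algebraMap K R c,
    mul_mem (pow_mem (Algebra.self_mem_adjoin_singleton K _) _) (Subalgebra.algebraMap_mem _ _), ?_⟩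
  rw [map_mul, map_pow, hφu, hc]
  ring

end IsDescentEntry

namespace IsDescentMatrix

variable {n : Type*} {br : n → n → ℕ} {M N : Matrix n n R}

theorem mul [Fintype n] (hM : IsDescentMatrix K u q br M) (hN : IsDescentMatrix K u q br N)
    (hbr : ∀ i j k, ∃ m, br i k + br k j = br i j + m * q) :
    IsDescentMatrix K u q br (M * N) := fun i j ↦
  IsDescentEntry.sum fun k _ ↦
    (hbr i j k).elim fun _ hm ↦ (hM i k).mul (hN k j) hm

theorem map {φ : R →ₐ[K] R} (hφu : φ u = u ^ (q + 1)) (hφt : φ (u ^ q) = 0)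
    (hM : IsDescentMatrix K u q br M) : IsDescentMatrix K u q br (M.map φ) := fun i j ↦
  (hM i j).map hφu hφt

theorem diagonal [DecidableEq n] (hbr : ∀ i, br i i = 0) (d : n → K) :
    IsDescentMatrix K u q br (Matrix.diagonal fun i ↦ algebraMap K R (d i)) := by
  intro i j
  by_cases h : i = j
  · subst h
    simpa [hbr] using IsDescentEntry.of_mem_adjoin (Subalgebra.algebraMap_mem _ (d i))
  · simpa [h] using IsDescentEntry.zero

end IsDescentMatrix

end DescentData

section Frobenius

variable {K R : Type*} [Field K] [CommRing R] [Algebra K R] {u : R} {q : ℕ} {φ : R →ₐ[K] R}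
  {β : ℕ} {G d c : R}

theorem exists_ne_zero_eq_algebraMap_add_mul_of_isUnit [Nontrivial R] {t : R} (hφt : φ t = 0)
    (hd : d ∈ Algebra.adjoin K {t}) (hdu : IsUnit d) :
    ∃ b : K, b ≠ 0 ∧ φ d = algebraMap K R b ∧ ∃ d' ∈ Algebra.adjoin K {t},
      d = algebraMap K R b + t * d' := by
  obtain ⟨b, d', hd', rfl⟩ := exists_eq_algebraMap_add_mul_of_mem_adjoin hd
  have hφd : φ (algebraMap K R b + t * d') = algebraMap K R b := by simp [hφt]
  refine ⟨b, ?_, hφd, d', hd', rfl⟩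
  rintro rfl
  have h := hdu.map φ
  rw [hφd, map_zero] at h
  exact not_isUnit_zero h

/-- Since `φ` kills `u ^ q`, `φ y` only depends on the constant term of `y / u ^ β`, and for
`k < β` the equation is solved by correcting `g` with a multiple of `(u ^ q) ^ (β - k) * φ g`. -/
theorem exists_isDescentEntry_pow_mul_eq_add_mul_map (hφu : φ u = u ^ (q + 1))
    (hφt : φ (u ^ q) = 0) {k : ℕ} (hk : k < β) {g : R}
    (hg : g ∈ Algebra.adjoin K ({u ^ q} : Set R)) (hd : d ∈ Algebra.adjoin K ({u ^ q} : Set R)) :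
    ∃ y, IsDescentEntry K u q β y ∧ (u ^ q) ^ k * y = u ^ β * ((u ^ q) ^ k * g) + d * φ y := by
  obtain ⟨j, rfl⟩ : ∃ j, β = k + j + 1 := ⟨β - k - 1, by omega⟩
  obtain ⟨a, ha⟩ := map_eq_algebraMap_of_mem_adjoin hφt hg
  have ht : u ^ q ∈ Algebra.adjoin K ({u ^ q} : Set R) := Algebra.self_mem_adjoin_singleton K _
  refine ⟨u ^ (k + j + 1) * (g + (u ^ q) ^ (j + 1) * (d * algebraMap K R a)),
    ⟨_, add_mem hg (mul_mem (pow_mem ht _) (mul_mem hd (Subalgebra.algebraMap_mem _ _))), rfl⟩, ?_⟩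
  simp only [map_mul, map_add, map_pow, hφu, hφt, ha, zero_pow (Nat.succ_ne_zero j)]
  ring

variable [Nontrivial R]

theorem exists_isDescentEntry_mul_eq_add (hφu : φ u = u ^ (q + 1)) (hφt : φ (u ^ q) = 0)
    (hβ : 1 < β) (hG : IsDescentEntry K u q β G) (hd : d ∈ Algebra.adjoin K ({u ^ q} : Set R))
    (hdu : IsUnit d) (hc : c ∈ Algebra.adjoin K ({u ^ q} : Set R)) :
    ∃ v : K, ∃ y, IsDescentEntry K u q β y ∧
      u ^ q * y = G + d * (φ y * c + u ^ β * algebraMap K R v) := by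
  obtain ⟨g, hg, rfl⟩ := hG
  obtain ⟨b, hb, -, d', hd', rfl⟩ := exists_ne_zero_eq_algebraMap_add_mul_of_isUnit hφt hd hdu
  obtain ⟨v, g', hg', hv⟩ := exists_add_mul_algebraMap_eq_mul hb hg hd'
  obtain ⟨y, hy, hy'⟩ := exists_isDescentEntry_pow_mul_eq_add_mul_map hφu hφt hβ hg' (mul_mem hd hc)
  exact ⟨v, y, hy, by linear_combination hy' - u ^ β * hv⟩

theorem exists_isDescentEntry_sq_mul_eq_add (hφu : φ u = u ^ (q + 1)) (hφt : φ (u ^ q) = 0)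
    (hβ : 2 < β) (hG : IsDescentEntry K u q β G) (hd : d ∈ Algebra.adjoin K ({u ^ q} : Set R))
    (hdu : IsUnit d) (hc : c ∈ Algebra.adjoin K ({u ^ q} : Set R)) :
    ∃ v v' : K, ∃ y, IsDescentEntry K u q β y ∧
      (u ^ q) ^ 2 * y =
        G + d * (φ y * c + u ^ β * (algebraMap K R v + u ^ q * algebraMap K R v')) := by
  obtain ⟨g, hg, rfl⟩ := hG
  obtain ⟨b, hb, -, d', hd', rfl⟩ := exists_ne_zero_eq_algebraMap_add_mul_of_isUnit hφt hd hdu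
  obtain ⟨v, v', g', hg', hv⟩ := exists_add_mul_eq_sq_mul hb hg hd'
  obtain ⟨y, hy, hy'⟩ := exists_isDescentEntry_pow_mul_eq_add_mul_map hφu hφt hβ hg' (mul_mem hd hc)
  exact ⟨v, v', y, hy, by linear_combination hy' - u ^ β * hv⟩

end Frobenius

/-- For `t = u ^ e`, the columns of `C * ordinaryFormMatrix t n₁₀ n₂₀ n₂₁` are the generators
`f̃₀, f̃₁, f̃₂` of an ordinary form with respect to the basis given by the columns of `C`. -/
def ordinaryFormMatrix {R : Type*} [CommRing R] (t n₁₀ n₂₀ n₂₁ : R) : Matrix (Fin 3) (Fin 3) R :=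
  !![1, 0, 0; n₁₀, t, 0; n₂₀, t * n₂₁, t ^ 2]

theorem mul_diagonal_mul_eq_mul_mul_ordinaryFormMatrix {R : Type*} [CommRing R]
    {W A : Matrix (Fin 3) (Fin 3) R} (hWu : ∀ i j : Fin 3, i < j → W i j = 0)
    (hWd : ∀ i, W i i = 1) (hA : ∀ i j : Fin 3, i < j → A i j = 0)
    {t n₁₀ n₂₀ n₂₁ p₁₀ p₂₀ p₂₁ y₁₀ y₂₀ y₂₁ : R}
    (h₁₀ : W 1 0 * A 0 0 + t * y₁₀ = A 1 0 + A 1 1 * (p₁₀ + n₁₀))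
    (h₂₁ : W 2 1 * A 1 1 + t * y₂₁ = A 2 1 + A 2 2 * (p₂₁ + n₂₁))
    (h₂₀ : W 2 0 * A 0 0 + t * W 2 1 * y₁₀ + t ^ 2 * y₂₀ =
      A 2 0 + A 2 1 * p₁₀ + (A 2 1 + A 2 2 * p₂₁) * n₁₀ + A 2 2 * (p₂₀ + n₂₀)) :
    W * diagonal ![1, t, t ^ 2] * !![A 0 0, 0, 0; y₁₀, A 1 1, 0; y₂₀, y₂₁, A 2 2] =
      A * !![1, 0, 0; p₁₀, 1, 0; p₂₀, p₂₁, 1] * ordinaryFormMatrix t n₁₀ n₂₀ n₂₁ := by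
  ext i j
  fin_cases i <;> fin_cases j <;>
    simp [ordinaryFormMatrix, Matrix.mul_apply, Fin.sum_univ_three, hWd, hWu 0 1 (by decide),
      hWu 0 2 (by decide), hWu 1 2 (by decide), hA 0 1 (by decide), hA 0 2 (by decide),
      hA 1 2 (by decide)]
  · linear_combination h₁₀
  · ring
  · linear_combination h₂₀
  · linear_combination t * h₂₁
  · ring

section OrdinaryFormColumns

variable {R : Type*} [CommRing R] (C : Matrix (Fin 3) (Fin 3) R) (t n₁₀ n₂₀ n₂₁ : R)

theorem col_zero_mul_ordinaryFormMatrix :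
    (C * ordinaryFormMatrix t n₁₀ n₂₀ n₂₁).col 0 = C.col 0 + n₁₀ • C.col 1 + n₂₀ • C.col 2 := by
  simp [col_mul, Fin.sum_univ_three, ordinaryFormMatrix]

theorem col_one_mul_ordinaryFormMatrix :
    (C * ordinaryFormMatrix t n₁₀ n₂₀ n₂₁).col 1 = t • C.col 1 + (t * n₂₁) • C.col 2 := by
  simp [col_mul, Fin.sum_univ_three, ordinaryFormMatrix]

theorem col_two_mul_ordinaryFormMatrix :
    (C * ordinaryFormMatrix t n₁₀ n₂₀ n₂₁).col 2 = t ^ 2 • C.col 2 := by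
  simp [col_mul, Fin.sum_univ_three, ordinaryFormMatrix]

end OrdinaryFormColumns
section LowerTriangular

variable {K R : Type*} [Field K] [CommRing R] [Algebra K R] [Nontrivial R] {u : R} {q : ℕ}
  {φ : R →ₐ[K] R} {br : Fin 3 → Fin 3 → ℕ} {W A : Matrix (Fin 3) (Fin 3) R}

theorem exists_lowerTriangular_solution (hφu : φ u = u ^ (q + 1)) (hφt : φ (u ^ q) = 0)
    (hbr : ∀ i, br i i = 0) (hbr₂₁₀ : ∃ m, br 2 1 + br 1 0 = br 2 0 + m * q)
    (h₁₀ : 1 < br 1 0) (h₂₁ : 1 < br 2 1) (h₂₀ : 2 < br 2 0)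
    (hW : IsDescentMatrix K u q br W) (hA : IsDescentMatrix K u q br A)
    (hAu : ∀ i, IsUnit (A i i)) {c : Fin 3 → R}
    (hc : ∀ i, c i ∈ Algebra.adjoin K ({u ^ q} : Set R)) :
    ∃ (v₁₀ v₂₀ v₂₀' v₂₁ : K) (y₁₀ y₂₀ y₂₁ : R), IsDescentEntry K u q (br 1 0) y₁₀ ∧
      IsDescentEntry K u q (br 2 0) y₂₀ ∧ IsDescentEntry K u q (br 2 1) y₂₁ ∧
      W 1 0 * A 0 0 + u ^ q * y₁₀ =
        A 1 0 + A 1 1 * (φ y₁₀ * c 0 + u ^ br 1 0 * algebraMap K R v₁₀) ∧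
      W 2 1 * A 1 1 + u ^ q * y₂₁ =
        A 2 1 + A 2 2 * (φ y₂₁ * c 1 + u ^ br 2 1 * algebraMap K R v₂₁) ∧
      W 2 0 * A 0 0 + u ^ q * W 2 1 * y₁₀ + (u ^ q) ^ 2 * y₂₀ =
        A 2 0 + A 2 1 * (φ y₁₀ * c 0) +
          (A 2 1 + A 2 2 * (φ y₂₁ * c 1)) * (u ^ br 1 0 * algebraMap K R v₁₀) +
          A 2 2 * (φ y₂₀ * c 0 +
            u ^ br 2 0 * (algebraMap K R v₂₀ + u ^ q * algebraMap K R v₂₀')) := by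
  have hdiag i : A i i ∈ Algebra.adjoin K ({u ^ q} : Set R) := (hbr i ▸ hA i i).mem_adjoin
  have hWA i j : IsDescentEntry K u q (br i j) (W i j * A j j) :=
    (hW i j).mul (hA j j) (m := 0) (by simp [hbr])
  obtain ⟨v₁₀, y₁₀, hy₁₀, e₁₀⟩ := exists_isDescentEntry_mul_eq_add hφu hφt h₁₀
    ((hA 1 0).sub (hWA 1 0)) (hdiag 1) (hAu 1) (hc 0)
  obtain ⟨v₂₁, y₂₁, hy₂₁, e₂₁⟩ := exists_isDescentEntry_mul_eq_add hφu hφt h₂₁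
    ((hA 2 1).sub (hWA 2 1)) (hdiag 2) (hAu 2) (hc 1)
  obtain ⟨m, hm⟩ := hbr₂₁₀
  have hp i j {y} (hy : IsDescentEntry K u q (br i j) y) :
      IsDescentEntry K u q (br i j) (φ y * c j) :=
    (hy.map hφu hφt).mul (IsDescentEntry.of_mem_adjoin (hc j)) (m := 0) (by simp)
  have hn₁₀ : IsDescentEntry K u q (br 1 0) (u ^ br 1 0 * algebraMap K R v₁₀) :=
    ⟨_, Subalgebra.algebraMap_mem _ _, rfl⟩
  have hG : IsDescentEntry K u q (br 2 0)
      (A 2 0 + A 2 1 * (φ y₁₀ * c 0) +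
        (A 2 1 + A 2 2 * (φ y₂₁ * c 1)) * (u ^ br 1 0 * algebraMap K R v₁₀) -
        W 2 0 * A 0 0 - u ^ q * (W 2 1 * y₁₀)) :=
    ((((hA 2 0).add ((hA 2 1).mul (hp 1 0 hy₁₀) hm)).add
      (((hA 2 1).add ((hp 2 1 hy₂₁).mul_left (hdiag 2))).mul hn₁₀ hm)).sub (hWA 2 0)).sub
      (((hW 2 1).mul hy₁₀ hm).mul_left (Algebra.self_mem_adjoin_singleton K _))
  obtain ⟨v₂₀, v₂₀', y₂₀, hy₂₀, e₂₀⟩ :=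
    exists_isDescentEntry_sq_mul_eq_add hφu hφt h₂₀ hG (hdiag 2) (hAu 2) (hc 0)
  exact ⟨v₁₀, v₂₀, v₂₀', v₂₁, y₁₀, y₂₀, y₂₁, hy₁₀, hy₂₀, hy₂₁, by linear_combination e₁₀,
    by linear_combination e₂₁, by linear_combination e₂₀⟩

theorem exists_ordinary_frame (hφu : φ u = u ^ (q + 1)) (hφt : φ (u ^ q) = 0)
    (hbr : ∀ i, br i i = 0) (hbr_add : ∀ i j k, ∃ m, br i k + br k j = br i j + m * q)
    (h₁₀ : 1 < br 1 0) (h₂₁ : 1 < br 2 1) (h₂₀ : 2 < br 2 0)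
    (hW : IsDescentMatrix K u q br W) (hWu : ∀ i j : Fin 3, i < j → W i j = 0)
    (hWd : ∀ i, W i i = 1) (hA : IsDescentMatrix K u q br A) (hAu : IsUnit A)
    (hAl : ∀ i j : Fin 3, i < j → A i j = 0) :
    ∃ (X C : Matrix (Fin 3) (Fin 3) R) (α : Fin 3 → Kˣ) (v₁₀ v₂₀ v₂₀' v₂₁ : K),
      IsUnit X ∧ IsUnit C ∧ IsDescentMatrix K u q br C ∧
      W * diagonal ![1, u ^ q, u ^ (2 * q)] * X =
        C * ordinaryFormMatrix (u ^ q) (u ^ br 1 0 * algebraMap K R v₁₀)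
          (u ^ br 2 0 * (algebraMap K R v₂₀ + u ^ q * algebraMap K R v₂₀'))
          (u ^ br 2 1 * algebraMap K R v₂₁) ∧
      A * X.map φ = C * diagonal fun i ↦ algebraMap K R (α i) := by
  have hAd := (isUnit_iff_forall_isUnit_of_isLowerTriangular fun i j h ↦ hAl i j h).1 hAu
  choose b hb hφb using fun i ↦ exists_ne_zero_eq_algebraMap_add_mul_of_isUnit hφt
    (hbr i ▸ hA i i).mem_adjoin (hAd i)
  set c : Fin 3 → R := fun i ↦ algebraMap K R (b i)⁻¹
  obtain ⟨v₁₀, v₂₀, v₂₀', v₂₁, y₁₀, y₂₀, y₂₁, hy₁₀, hy₂₀, hy₂₁, e₁₀, e₂₁, e₂₀⟩ :=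
    exists_lowerTriangular_solution (c := c) hφu hφt hbr (hbr_add 2 0 1) h₁₀ h₂₁ h₂₀ hW hA hAd
      fun i ↦ Subalgebra.algebraMap_mem _ _
  set X : Matrix (Fin 3) (Fin 3) R := !![A 0 0, 0, 0; y₁₀, A 1 1, 0; y₂₀, y₂₁, A 2 2]
  have hX : IsUnit X := by
    refine (isUnit_iff_forall_isUnit_of_isLowerTriangular ?_).2 fun i ↦ ?_
    · intro i j h
      fin_cases i <;> fin_cases j <;> first | rfl | exact absurd h (by decide)
    · fin_cases i <;> exact hAd _
  have hXdd : IsDescentMatrix K u q br X := by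
    intro i j
    fin_cases i <;> fin_cases j <;> first | exact IsDescentEntry.zero | exact hA _ _ | assumption
  have hXφ :
      X.map φ * diagonal c = !![1, 0, 0; φ y₁₀ * c 0, 1, 0; φ y₂₀ * c 0, φ y₂₁ * c 1, 1] := by
    ext i j
    fin_cases i <;> fin_cases j <;> simp [X, c, (hφb _).1, ← map_mul, hb]
  have hc : IsUnit (diagonal c) :=
    isUnit_diagonal.2 <| Pi.isUnit_iff.2 fun i ↦ (IsUnit.mk0 _ (inv_ne_zero (hb i))).map _
  refine ⟨X, A * X.map φ * diagonal c, fun i ↦ Units.mk0 (b i) (hb i), v₁₀, v₂₀, v₂₀', v₂₁, hX,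
    (hAu.mul (hX.map φ.mapMatrix)).mul hc,
    ((hA.mul (hXdd.map hφu hφt) hbr_add).mul (IsDescentMatrix.diagonal hbr _) hbr_add), ?_, ?_⟩
  · rw [Matrix.mul_assoc A, hXφ, pow_mul' u 2 q]
    exact mul_diagonal_mul_eq_mul_mul_ordinaryFormMatrix hWu hWd hAl e₁₀ e₂₁ e₂₀
  · rw [Matrix.mul_assoc, diagonal_mul_diagonal]
    simp [c, ← map_mul, hb]

end LowerTriangular
theorem Sbar.u_pow_mul_eq_zero (p : ℕ) (R : Type*) [CommRing R] :
    Sbar.u p R ^ ((p - 1) * p) = 0 := by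
  change (Ideal.Quotient.mk _ X : R[X] ⧸ _) ^ ((p - 1) * p) = 0
  rw [← map_pow, Ideal.Quotient.eq_zero_iff_mem]
  exact Ideal.mem_span_singleton_self _

theorem Sbar.nontrivial (p : ℕ) (R : Type*) [CommRing R] [Nontrivial R] (hp : 2 ≤ p) :
    Nontrivial (Sbar p R) := by
  refine Ideal.Quotient.nontrivial_iff.mpr fun h ↦ ?_
  rw [Ideal.span_singleton_eq_top] at h
  exact not_isUnit_X (isUnit_of_dvd_unit (dvd_pow_self X (Nat.mul_pos (by omega) (by omega)).ne') h)

section Bracket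

variable {n : Type*} {a : n → ℤ} {br : n → n → ℕ} {q : ℕ}
  (hbr : ∀ i j, br i j < q ∧ (q : ℤ) ∣ (br i j : ℤ) + (a i - a j))
include hbr

theorem bracket_self_eq_zero (i : n) : br i i = 0 := by
  have h := hbr i i
  rw [sub_self, add_zero] at h
  exact_mod_cast Int.eq_zero_of_dvd_of_nonneg_of_lt (by positivity) (by exact_mod_cast h.1) h.2

theorem exists_bracket_add_eq (i j k : n) : ∃ m, br i k + br k j = br i j + m * q := by
  have h : br i j ≡ br i k + br k j [MOD q] := Nat.modEq_iff_dvd.2 <| by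
    have h := dvd_sub (dvd_add (hbr i k).2 (hbr k j).2) (hbr i j).2
    push_cast
    ring_nf at h ⊢
    exact h
  have h' := Nat.mod_add_div (br i k + br k j) q
  rw [← h, Nat.mod_eq_of_lt (hbr i j).1] at h'
  exact ⟨(br i k + br k j) / q, by linarith⟩

theorem bracket_eq_sub {i j : n} (h₀ : 0 < a i - a j) (h₁ : a i - a j < q) :
    (br i j : ℤ) = q - (a i - a j) := by
  obtain ⟨k, hk⟩ := (hbr i j).2
  have hlt : (br i j : ℤ) < q := by exact_mod_cast (hbr i j).1
  have : k = 1 := by nlinarith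
  subst this
  linarith

end Bracket

theorem ordinary_form_with_diagonal_frobenius_general
    (p : ℕ)
    (𝔽 : Type*) [Field 𝔽]
    (a : Fin 3 → ℤ)
    (hg01 : 3 < a 1 - a 0) (hg12 : 3 < a 2 - a 1) (hg02 : a 2 - a 0 < (p : ℤ) - 4)
    (br : Fin 3 → Fin 3 → ℕ)
    (hbr : ∀ i j, br i j < p - 1 ∧ ((p : ℤ) - 1) ∣ ((br i j : ℤ) + (a i - a j)))
    (φ : Sbar p 𝔽 →ₐ[𝔽] Sbar p 𝔽) (hφ : φ (Sbar.u p 𝔽) = Sbar.u p 𝔽 ^ p)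
    (W : Matrix (Fin 3) (Fin 3) (Sbar p 𝔽))
    (hWdd : ∀ i j, ∃ w ∈ Algebra.adjoin 𝔽 ({Sbar.u p 𝔽 ^ (p - 1)} : Set (Sbar p 𝔽)),
        W i j = Sbar.u p 𝔽 ^ br i j * w)
    (hWupper : ∀ i j : Fin 3, i < j → W i j = 0)
    (hWdiag : ∀ i : Fin 3, W i i = 1)
    (V : Matrix (Fin 3) (Fin 3) (Sbar p 𝔽))
    (hV : V = W * Matrix.diagonal ![1, Sbar.u p 𝔽 ^ (p - 1), Sbar.u p 𝔽 ^ (2 * (p - 1))])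
    (f : Fin 3 → (Fin 3 → Sbar p 𝔽))
    (hf : ∀ j, f j = fun i => V i j)
    (Fil : Submodule (Sbar p 𝔽) (Fin 3 → Sbar p 𝔽))
    (hFil : Fil = Submodule.span (Sbar p 𝔽) {f 0, f 1, f 2})
    (hmem : ∀ j, f j ∈ Fil)
    (A : Matrix (Fin 3) (Fin 3) (Sbar p 𝔽))
    (hAunit : IsUnit A)
    (hAdd : ∀ i j, ∃ w ∈ Algebra.adjoin 𝔽 ({Sbar.u p 𝔽 ^ (p - 1)} : Set (Sbar p 𝔽)),
        A i j = Sbar.u p 𝔽 ^ br i j * w)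
    (hAlower : ∀ i j : Fin 3, i < j → A i j = 0)
    (φ2 : Fil →+ (Fin 3 → Sbar p 𝔽))
    (hφ2lin : ∀ (s : Sbar p 𝔽) (x : Fil), φ2 (s • x) = φ s • (φ2 x))
    (hφ2f : ∀ j : Fin 3, φ2 ⟨f j, hmem j⟩ = fun i => A i j) :
    ∃ C : Matrix (Fin 3) (Fin 3) (Sbar p 𝔽),
      IsUnit C ∧
      (∀ i j, ∃ w ∈ Algebra.adjoin 𝔽 ({Sbar.u p 𝔽 ^ (p - 1)} : Set (Sbar p 𝔽)),
          C i j = Sbar.u p 𝔽 ^ br i j * w) ∧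
      ∃ (v10 v20 v20' v21 : 𝔽) (α : Fin 3 → 𝔽ˣ)
        (ft : Fin 3 → (Fin 3 → Sbar p 𝔽)) (hmem' : ∀ i, ft i ∈ Fil),
        ft 0 = (fun i => C i 0)
            + (Sbar.u p 𝔽 ^ br 1 0 * algebraMap 𝔽 (Sbar p 𝔽) v10) • (fun i => C i 1)
            + (Sbar.u p 𝔽 ^ br 2 0 *
                (algebraMap 𝔽 (Sbar p 𝔽) v20 +
                  Sbar.u p 𝔽 ^ (p - 1) * algebraMap 𝔽 (Sbar p 𝔽) v20')) •
                (fun i => C i 2) ∧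
        ft 1 = (Sbar.u p 𝔽 ^ (p - 1)) • (fun i => C i 1)
            + (Sbar.u p 𝔽 ^ ((p - 1) + br 2 1) * algebraMap 𝔽 (Sbar p 𝔽) v21) •
                (fun i => C i 2) ∧
        ft 2 = (Sbar.u p 𝔽 ^ (2 * (p - 1))) • (fun i => C i 2) ∧
        Submodule.span (Sbar p 𝔽) {ft 0, ft 1, ft 2} = Fil ∧
        ∀ i : Fin 3, φ2 ⟨ft i, hmem' i⟩ =
          algebraMap 𝔽 (Sbar p 𝔽) ((α i : 𝔽)) • (fun k => C k i) := by
  obtain rfl : f = V.col := funext hf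
  have hbr' : ∀ i j, br i j < p - 1 ∧ ((p - 1 : ℕ) : ℤ) ∣ (br i j : ℤ) + (a i - a j) := by
    rwa [Nat.cast_pred (by omega)]
  have := Sbar.nontrivial p 𝔽 (by omega)
  have hφu : φ (Sbar.u p 𝔽) = Sbar.u p 𝔽 ^ (p - 1 + 1) := by
    rw [hφ, Nat.sub_add_cancel (by omega)]
  have hφt : φ (Sbar.u p 𝔽 ^ (p - 1)) = 0 := by
    rw [map_pow, hφ, ← pow_mul, mul_comm, Sbar.u_pow_mul_eq_zero]
  have h₁₀ := bracket_eq_sub hbr' (i := 1) (j := 0) (by omega) (by omega)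
  have h₂₁ := bracket_eq_sub hbr' (i := 2) (j := 1) (by omega) (by omega)
  have h₂₀ := bracket_eq_sub hbr' (i := 2) (j := 0) (by omega) (by omega)
  obtain ⟨X, C, α, v₁₀, v₂₀, v₂₀', v₂₁, hX, hC, hCdd, hVX, hAX⟩ :=
    exists_ordinary_frame hφu hφt (bracket_self_eq_zero hbr') (exists_bracket_add_eq hbr')
      (by omega) (by omega) (by omega) hWdd hWupper hWdiag hAdd hAunit hAlower
  rw [← hV] at hVX
  refine ⟨C, hC, hCdd, v₁₀, v₂₀, v₂₀', v₂₁, α, (V * X).col, col_mul_mem hmem X,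
    by rw [hVX, col_zero_mul_ordinaryFormMatrix]; rfl,
    by rw [hVX, col_one_mul_ordinaryFormMatrix, pow_add, mul_assoc]; rfl,
    by rw [hVX, col_two_mul_ordinaryFormMatrix, pow_mul']; rfl, ?_, fun j ↦ ?_⟩
  · rw [hFil, ← Set.range_fin_three, ← Set.range_fin_three, span_range_col_mul_of_isUnit V hX]
  · rw [φ2.map_col_mul hmem hφ2lin hφ2f, hAX, col_mul_diagonal]
    rfl

/-- Diagonalization of the Frobenius on an ordinary quasi-Breuil module mod `p`:
if `Fil` is generated by the columns of `V = W·Diag(1, u^e, u^{2e})` with `W` lower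
triangular unipotent with descent data, and `φ₂` is semilinear with invertible lower
triangular Frobenius matrix `A` with descent data, then there is a new framed basis
`ẽ = e·C` (`C` invertible with descent data) and generators `f̃` of `Fil` in ordinary
form on which `φ₂` acts diagonally: `φ₂(f̃_i) = α_i ẽ_i` with `α_i ∈ 𝔽ˣ`. -/
theorem ordinary_form_with_diagonal_frobenius
    (p : ℕ) (hp : p.Prime)
    (𝔽 : Type*) [Field 𝔽] [Finite 𝔽] [CharP 𝔽 p]
    (a : Fin 3 → ℤ)
    (ha01 : a 0 < a 1) (ha12 : a 1 < a 2)
    (hg01 : 3 < a 1 - a 0) (hg12 : 3 < a 2 - a 1) (hg02 : a 2 - a 0 < (p : ℤ) - 4)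
    (br : Fin 3 → Fin 3 → ℕ)
    (hbr : ∀ i j, br i j < p - 1 ∧ ((p : ℤ) - 1) ∣ ((br i j : ℤ) + (a i - a j)))
    (φ : Sbar p 𝔽 →ₐ[𝔽] Sbar p 𝔽) (hφ : φ (Sbar.u p 𝔽) = Sbar.u p 𝔽 ^ p)
    (W : Matrix (Fin 3) (Fin 3) (Sbar p 𝔽))
    (hWdd : ∀ i j, ∃ w ∈ Algebra.adjoin 𝔽 ({Sbar.u p 𝔽 ^ (p - 1)} : Set (Sbar p 𝔽)),
        W i j = Sbar.u p 𝔽 ^ br i j * w)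
    (hWupper : ∀ i j : Fin 3, i < j → W i j = 0)
    (hWdiag : ∀ i : Fin 3, W i i = 1)
    (V : Matrix (Fin 3) (Fin 3) (Sbar p 𝔽))
    (hV : V = W * Matrix.diagonal ![1, Sbar.u p 𝔽 ^ (p - 1), Sbar.u p 𝔽 ^ (2 * (p - 1))])
    (f : Fin 3 → (Fin 3 → Sbar p 𝔽))
    (hf : ∀ j, f j = fun i => V i j)
    (Fil : Submodule (Sbar p 𝔽) (Fin 3 → Sbar p 𝔽))
    (hFil : Fil = Submodule.span (Sbar p 𝔽) {f 0, f 1, f 2})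
    (hmem : ∀ j, f j ∈ Fil)
    (A : Matrix (Fin 3) (Fin 3) (Sbar p 𝔽))
    (hAunit : IsUnit A)
    (hAdd : ∀ i j, ∃ w ∈ Algebra.adjoin 𝔽 ({Sbar.u p 𝔽 ^ (p - 1)} : Set (Sbar p 𝔽)),
        A i j = Sbar.u p 𝔽 ^ br i j * w)
    (hAlower : ∀ i j : Fin 3, i < j → A i j = 0)
    (φ2 : Fil →+ (Fin 3 → Sbar p 𝔽))
    (hφ2lin : ∀ (s : Sbar p 𝔽) (x : Fil), φ2 (s • x) = φ s • (φ2 x))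
    (hφ2f : ∀ j : Fin 3, φ2 ⟨f j, hmem j⟩ = fun i => A i j) :
    ∃ C : Matrix (Fin 3) (Fin 3) (Sbar p 𝔽),
      IsUnit C ∧
      (∀ i j, ∃ w ∈ Algebra.adjoin 𝔽 ({Sbar.u p 𝔽 ^ (p - 1)} : Set (Sbar p 𝔽)),
          C i j = Sbar.u p 𝔽 ^ br i j * w) ∧
      ∃ (v10 v20 v20' v21 : 𝔽) (α : Fin 3 → 𝔽ˣ)
        (ft : Fin 3 → (Fin 3 → Sbar p 𝔽)) (hmem' : ∀ i, ft i ∈ Fil),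
        ft 0 = (fun i => C i 0)
            + (Sbar.u p 𝔽 ^ br 1 0 * algebraMap 𝔽 (Sbar p 𝔽) v10) • (fun i => C i 1)
            + (Sbar.u p 𝔽 ^ br 2 0 *
                (algebraMap 𝔽 (Sbar p 𝔽) v20 +
                  Sbar.u p 𝔽 ^ (p - 1) * algebraMap 𝔽 (Sbar p 𝔽) v20')) •
                (fun i => C i 2) ∧
        ft 1 = (Sbar.u p 𝔽 ^ (p - 1)) • (fun i => C i 1)
            + (Sbar.u p 𝔽 ^ ((p - 1) + br 2 1) * algebraMap 𝔽 (Sbar p 𝔽) v21) •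
                (fun i => C i 2) ∧
        ft 2 = (Sbar.u p 𝔽 ^ (2 * (p - 1))) • (fun i => C i 2) ∧
        Submodule.span (Sbar p 𝔽) {ft 0, ft 1, ft 2} = Fil ∧
        ∀ i : Fin 3, φ2 ⟨ft i, hmem' i⟩ =
          algebraMap 𝔽 (Sbar p 𝔽) ((α i : 𝔽)) • (fun k => C k i) :=
  ordinary_form_with_diagonal_frobenius_general p 𝔽 a hg01 hg12 hg02 br hbr φ hφ W hWdd hWupper
    hWdiag V hV f hf Fil hFil hmem A hAunit hAdd hAlower φ2 hφ2lin hφ2f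
end

section
/- Let p be a prime, e = p − 1, and E(X) = X^e + p, regarded as a polynomial in ℚ_p[X]. For all integers n and i with 1 ≤ n < p and i ≥ n, there exist elements a_0, …, a_{n−1} ∈ ℤ_p and b_n, …, b_i ∈ ℤ_p such that X^{ie}/i! = Σ_{k=0}^{n−1} p^{n−k} a_k E(X)^k + Σ_{k=n}^{i} b_k · E(X)^k / k! in ℚ_p[X]. -/
open Polynomial Finset Nat

/-! Since `X ^ e = E - p`, the binomial theorem gives
`X ^ (i e) / i! = ∑ₖ (-p) ^ (i - k) / (i - k)! · E ^ k / k!`. Legendre's formula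
`(p - 1) v_p(m!) < m` yields `v_p(m!) + j ≤ m` for every `j < p` with `j ≤ m`: with `j = 0` the
coefficients of `E ^ k / k!` are `p`-adic integers, and with `j = n - k` the coefficients of
`E ^ k` for `k < n` are divisible by `p ^ (n - k)`, as `k!` is a unit there. -/

theorem padicValNat_factorial_add_le (p : ℕ) [Fact p.Prime] {m j : ℕ} (hjp : j < p)
    (hjm : j ≤ m) : padicValNat p m ! + j ≤ m := by
  rcases Nat.eq_zero_or_pos m with rfl | hm
  · simp_all
  have hlt := sub_one_mul_padicValNat_factorial_lt_of_ne_zero p hm.ne'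
  obtain ⟨q, rfl⟩ : ∃ q, p = q + 1 := ⟨p - 1, by have := (Fact.out : p.Prime).pos; omega⟩
  rw [Nat.add_sub_cancel] at hlt
  have hq : 1 ≤ q := by have := (Fact.out : (q + 1).Prime).two_le; omega
  rcases Nat.eq_zero_or_pos (padicValNat (q + 1) m !) with hv | hv
  · omega
  -- `v + j ≤ v + q ≤ q v + 1 ≤ m`, as `(q - 1) (v - 1) ≥ 0`
  · nlinarith

theorem algebraMap_inv_factorial_mul_add_pow {K A : Type*} [Field K] [CharZero K] [CommRing A]
    [Algebra K A] (x : A) (c : K) (i : ℕ) :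
    algebraMap K A (i ! : K)⁻¹ * (x + algebraMap K A c) ^ i =
      ∑ k ∈ range (i + 1), algebraMap K A (c ^ (i - k) / (i - k)! / k !) * x ^ k := by
  rw [add_pow, mul_sum]
  refine sum_congr rfl fun k hk => ?_
  have hki : k ≤ i := Nat.lt_succ_iff.mp (mem_range.mp hk)
  rw [← map_pow, ← map_natCast (algebraMap K A), Nat.cast_choose K hki]
  have hcoeff : (i ! : K)⁻¹ * (c ^ (i - k) * (i ! / (k ! * (i - k)!))) =
      c ^ (i - k) / (i - k)! / k ! := by
    have : (i ! : K) ≠ 0 := Nat.cast_ne_zero.mpr i.factorial_ne_zero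
    field_simp
  rw [← hcoeff, map_mul, map_mul]
  ring

namespace Padic

variable {p : ℕ} [Fact p.Prime]

theorem norm_p_pow_div_natCast_le_one {a m : ℕ} (hm : m ≠ 0)
    (h : padicValNat p m ≤ a) : ‖(p : ℚ_[p]) ^ a / m‖ ≤ 1 := by
  have hp : (1 : ℝ) < p := by exact_mod_cast (Fact.out : p.Prime).one_lt
  rw [norm_div, norm_p_pow, norm_eq_zpow_neg_valuation (by exact_mod_cast hm),
    valuation_natCast, ← zpow_sub₀ (by positivity)]
  exact zpow_le_one_of_nonpos₀ hp.le (by omega)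

theorem exists_mul_inv_factorial_eq (i k : ℕ) :
    ∃ b : ℤ_[p], (b : ℚ_[p]) * (k ! : ℚ_[p])⁻¹ =
      (-(p : ℚ_[p])) ^ (i - k) / (i - k)! / (k ! : ℚ_[p]) := by
  refine ⟨⟨(-(p : ℚ_[p])) ^ (i - k) / (i - k)!, ?_⟩, div_eq_mul_inv _ _ |>.symm⟩
  rw [neg_pow, mul_div_assoc, norm_mul, norm_pow, norm_neg, norm_one, one_pow, one_mul]
  exact norm_p_pow_div_natCast_le_one (factorial_ne_zero _) (padicValNat_factorial_le p _)

theorem exists_p_pow_sub_mul_eq {n i k : ℕ} (hnp : n < p) (hkn : k < n) (hni : n ≤ i) :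
    ∃ a : ℤ_[p], (p : ℚ_[p]) ^ (n - k) * a =
      (-(p : ℚ_[p])) ^ (i - k) / (i - k)! / (k ! : ℚ_[p]) := by
  refine ⟨⟨(-1) ^ (i - k) * ((p : ℚ_[p]) ^ (i - n) / ((i - k)! * k ! : ℕ)), ?_⟩, ?_⟩
  · rw [norm_mul, norm_pow, norm_neg, norm_one, one_pow, one_mul]
    refine norm_p_pow_div_natCast_le_one (by positivity) ?_
    have hik := padicValNat_factorial_add_le p (m := i - k) (j := n - k) (by omega) (by omega)
    have hk := padicValNat_factorial_add_le p (m := k) (j := k) (by omega) le_rfl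
    rw [padicValNat.mul (factorial_ne_zero _) (factorial_ne_zero _)]
    omega
  · simp only [neg_pow (p : ℚ_[p]), Nat.cast_mul]
    rw [show i - k = (n - k) + (i - n) by omega, pow_add]
    ring

end Padic

theorem divided_power_expansion_general
    (p : ℕ) [hp : Fact p.Prime] (n i : ℕ) (hnp : n < p) (hni : n ≤ i) :
    ∃ a b : ℕ → ℤ_[p],
      C ((Nat.factorial i : ℚ_[p])⁻¹) * X ^ (i * (p - 1)) =
        (∑ k ∈ Finset.range n,
          C ((p : ℚ_[p]) ^ (n - k) * ((a k : ℚ_[p]))) * (X ^ (p - 1) + C (p : ℚ_[p])) ^ k) +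
        (∑ k ∈ Finset.Icc n i,
          C ((b k : ℚ_[p]) * (Nat.factorial k : ℚ_[p])⁻¹) * (X ^ (p - 1) + C (p : ℚ_[p])) ^ k) := by
  set E : ℚ_[p][X] := X ^ (p - 1) + C (p : ℚ_[p])
  set c : ℕ → ℚ_[p] := fun k => (-(p : ℚ_[p])) ^ (i - k) / (i - k)! / (k ! : ℚ_[p])
  have hexpand : C (i ! : ℚ_[p])⁻¹ * X ^ (i * (p - 1)) = ∑ k ∈ range (i + 1), C (c k) * E ^ k := by
    have hX : (X : ℚ_[p][X]) ^ (i * (p - 1)) = (E + C (-(p : ℚ_[p]))) ^ i := by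
      rw [mul_comm, pow_mul, C_neg, add_neg_cancel_right]
    rw [hX, ← algebraMap_eq, algebraMap_inv_factorial_mul_add_pow]
  have ha : ∀ k, ∃ a : ℤ_[p], k < n → (p : ℚ_[p]) ^ (n - k) * a = c k := fun k =>
    if hkn : k < n then (Padic.exists_p_pow_sub_mul_eq hnp hkn hni).imp fun _ h _ => h
    else ⟨0, fun h => absurd h hkn⟩
  have hb : ∀ k, ∃ b : ℤ_[p], (b : ℚ_[p]) * (k ! : ℚ_[p])⁻¹ = c k :=
    Padic.exists_mul_inv_factorial_eq i
  choose a ha using ha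
  choose b hb using hb
  refine ⟨a, b, ?_⟩
  rw [hexpand, ← sum_range_add_sum_Ico _ (by omega : n ≤ i + 1), Ico_add_one_right_eq_Icc]
  congr 1
  · exact sum_congr rfl fun k hk => by rw [ha k (mem_range.mp hk)]
  · exact sum_congr rfl fun k _ => by rw [hb k]

/-- Expansion of the divided power `X^{ie}/i!` in powers of the Eisenstein polynomial
`E(X) = X^e + p` (with `e = p - 1`): for `1 ≤ n < p` and `i ≥ n`,
`X^{ie}/i! = ∑_{k=0}^{n-1} p^{n-k} a_k E(X)^k + ∑_{k=n}^{i} b_k E(X)^k / k!`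
with `a_k, b_k ∈ ℤ_p`. -/
theorem divided_power_expansion
    (p : ℕ) [hp : Fact p.Prime] (n i : ℕ) (hn1 : 1 ≤ n) (hnp : n < p) (hni : n ≤ i) :
    ∃ a b : ℕ → ℤ_[p],
      C ((Nat.factorial i : ℚ_[p])⁻¹) * X ^ (i * (p - 1)) =
        (∑ k ∈ Finset.range n,
          C ((p : ℚ_[p]) ^ (n - k) * ((a k : ℚ_[p]))) * (X ^ (p - 1) + C (p : ℚ_[p])) ^ k) +
        (∑ k ∈ Finset.Icc n i,
          C ((b k : ℚ_[p]) * (Nat.factorial k : ℚ_[p])⁻¹) * (X ^ (p - 1) + C (p : ℚ_[p])) ^ k) :=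
  divided_power_expansion_general p (hp := hp) n i hnp hni
end

section
/- Let S be a commutative ring, φ : S → S a ring homomorphism, and n ≥ 1 an integer. Let M = S^n with standard basis e_1, …, e_n, let V be an n×n matrix over S, let f_j = Σ_i V_{ij} e_i be the columns of V, and let Fil ⊆ M be the S-submodule generated by f_1, …, f_n. Let φ_2 : Fil → M be an additive map satisfying φ_2(s·x) = φ(s)·φ_2(x) for all s ∈ S and x ∈ Fil, and let A be an invertible n×n matrix over S such that φ_2(f_j) = Σ_i A_{ij} e_i for all j. Suppose B is an invertible n×n matrix over S and V' an n×n matrix over S with A·V' = V·B. Define e'_j = Σ_i A_{ij} e_i and f'_j = Σ_i V'_{ij} e'_i. Then each f'_j lies in Fil, the family (f'_1, …, f'_n) generates Fil as an S-module, and φ_2(f'_j) = Σ_i (φ(B))_{ij} e'_i for all j, where φ(B) denotes the matrix obtained by applying φ to each entry of B. -/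
/-- Change of basis for a module with a `φ`-semilinear Frobenius: if `V` is the matrix of
the generators `f_j = ∑_i V_{ij} e_i` of `Fil`, `A` is the (invertible) matrix of `φ_2`
with respect to `(e, f)`, and `A·V' = V·B` with `B` invertible, then setting
`e'_j = ∑_i A_{ij} e_i` and `f'_j = ∑_i V'_{ij} e'_i`, the `f'_j` lie in `Fil`, generate
`Fil`, and `φ_2(f'_j) = ∑_i φ(B)_{ij} e'_i`. -/
theorem change_of_basis_semilinear_frobenius
    (S : Type*) [CommRing S] (φ : S →+* S) (n : ℕ) (hn : 1 ≤ n)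
    (V A B V' : Matrix (Fin n) (Fin n) S)
    (hA : IsUnit A) (hB : IsUnit B)
    (hAV : A * V' = V * B)
    (Fil : Submodule S (Fin n → S))
    (hFil : Fil = Submodule.span S (Set.range fun j => (fun i => V i j)))
    (hfmem : ∀ j, (fun i => V i j) ∈ Fil)
    (φ2 : Fil →+ (Fin n → S))
    (hsemi : ∀ (s : S) (x : Fil), φ2 (s • x) = φ s • (φ2 x))
    (hφ2 : ∀ j, φ2 ⟨fun i => V i j, hfmem j⟩ = fun i => A i j) :
    ∃ hmem : ∀ j, (∑ i, V' i j • (fun k => A k i) : Fin n → S) ∈ Fil,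
      Submodule.span S (Set.range fun j => (∑ i, V' i j • (fun k => A k i) : Fin n → S)) = Fil ∧
      ∀ j, φ2 ⟨∑ i, V' i j • (fun k => A k i), hmem j⟩
            = ∑ i, φ (B i j) • (fun k => A k i) := by
  haveI : Invertible B := hB.invertible
  have key : ∀ j, (∑ i, V' i j • (fun k => A k i) : Fin n → S)
      = ∑ i, B i j • (fun k => V k i) := by
    intro j
    funext k
    have h1 : (A * V') k j = (V * B) k j := by rw [hAV]
    simp only [Matrix.mul_apply] at h1
    simp only [Finset.sum_apply, Pi.smul_apply, smul_eq_mul]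
    calc ∑ i, V' i j * A k i = ∑ i, A k i * V' i j := by simp [mul_comm]
    _ = ∑ i, V k i * B i j := h1
    _ = ∑ i, B i j * V k i := by simp [mul_comm]
  have hmem : ∀ j, (∑ i, V' i j • (fun k => A k i) : Fin n → S) ∈ Fil := by
    intro j
    rw [key]
    exact Submodule.sum_mem _ fun i _ => Submodule.smul_mem _ _ (hfmem i)
  refine ⟨hmem, ?_, ?_⟩
  · apply le_antisymm
    · rw [Submodule.span_le]
      rintro _ ⟨j, rfl⟩
      exact hmem j
    · conv_lhs => rw [hFil]
      rw [Submodule.span_le]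
      rintro _ ⟨j, rfl⟩
      have hcol : (fun i => V i j)
          = ∑ i, (⅟B) i j • (∑ l, V' l i • (fun k => A k l) : Fin n → S) := by
        funext k
        have hB1 : ∀ l, (∑ i, B l i * (⅟B) i j) = if l = j then 1 else 0 := by
          intro l
          have := congrArg (fun M : Matrix (Fin n) (Fin n) S => M l j) (mul_invOf_self B)
          simpa [Matrix.mul_apply, Matrix.one_apply] using this
        simp only [key, Finset.sum_apply, Pi.smul_apply, smul_eq_mul]
        calc V k j = ∑ l, (if l = j then (1:S) else 0) * V k l := by simp
        _ = ∑ l, (∑ i, B l i * (⅟B) i j) * V k l := by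
            refine Finset.sum_congr rfl fun l _ => by rw [hB1 l]
        _ = ∑ l, ∑ i, (⅟B) i j * (B l i * V k l) := by
            refine Finset.sum_congr rfl fun l _ => by rw [Finset.sum_mul]; exact Finset.sum_congr rfl fun i _ => by ring
        _ = ∑ i, (⅟B) i j * ∑ l, B l i * V k l := by
            rw [Finset.sum_comm]
            exact Finset.sum_congr rfl fun i _ => by rw [Finset.mul_sum]
      show (fun i => V i j) ∈ _
      rw [hcol]
      exact Submodule.sum_mem _ fun i _ => Submodule.smul_mem _ _
        (Submodule.subset_span ⟨i, rfl⟩)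
  · intro j
    have heq : (⟨∑ i, V' i j • (fun k => A k i), hmem j⟩ : Fil)
        = ∑ i, B i j • (⟨fun k => V k i, hfmem i⟩ : Fil) := by
      apply Subtype.ext
      push_cast
      exact key j
    rw [heq, map_sum]
    simp only [hsemi, hφ2]
end

section
/- Let S be a commutative ring, E ∈ S a non-zero-divisor, ε ∈ S^× a unit, and V a 3×3 matrix over S with det V = ε·E³. (a) If C is a 3×3 matrix over S satisfying V·C = E²·Id, then adj(V) = ε·E·C; in particular, every entry of the adjugate matrix adj(V) is divisible by E. (b) If A, V', X are 3×3 matrices over S satisfying adj(V)·A·V' = E³·X, then A·V' = ε^{−1}·V·X. -/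
/-- Adjugate manipulations for a `3×3` matrix `V` with `det V = ε·E³` (`E` a
non-zero-divisor, `ε` a unit):
(a) if `V·C = E²·Id` then `adj(V) = ε·E·C`, and in particular every entry of `adj(V)` is
divisible by `E`; (b) if `adj(V)·A·V' = E³·X` then `A·V' = ε⁻¹·(V·X)`. -/
theorem adjugate_of_filtration_matrix
    (S : Type*) [CommRing S] (E : S) (hE : E ∈ nonZeroDivisors S)
    (ε : Sˣ) (V : Matrix (Fin 3) (Fin 3) S) (hV : V.det = (ε : S) * E ^ 3) :
    (∀ C : Matrix (Fin 3) (Fin 3) S,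
        V * C = (E ^ 2) • (1 : Matrix (Fin 3) (Fin 3) S) →
        V.adjugate = ((ε : S) * E) • C ∧ ∀ i j, E ∣ V.adjugate i j) ∧
    (∀ A V' X : Matrix (Fin 3) (Fin 3) S,
        V.adjugate * A * V' = (E ^ 3) • X →
        A * V' = ((ε⁻¹ : Sˣ) : S) • (V * X)) := by
  have hcancel : ∀ (n : ℕ) (M N : Matrix (Fin 3) (Fin 3) S),
      (E ^ n) • M = (E ^ n) • N → M = N := by
    intro n M N h
    ext i j
    have h' := congrFun (congrFun h i) j
    simp only [Matrix.smul_apply, smul_eq_mul] at h'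
    exact (mul_cancel_left_mem_nonZeroDivisors (pow_mem hE n)).mp h'
  constructor
  · intro C hC
    have key : V.adjugate = ((ε : S) * E) • C := by
      apply hcancel 2
      have h1 : V.adjugate * (V * C) = V.adjugate * ((E ^ 2) • 1) := by rw [hC]
      rw [← mul_assoc, Matrix.adjugate_mul, hV, Matrix.mul_smul, mul_one, Matrix.smul_mul, one_mul] at h1
      calc (E ^ 2) • V.adjugate = ((ε : S) * E ^ 3) • C := h1.symm
        _ = (E ^ 2) • (((ε : S) * E) • C) := by
            rw [smul_smul]; ring_nf
    refine ⟨key, fun i j => ?_⟩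
    rw [key]
    exact ⟨(ε : S) * C i j, by simp [Matrix.smul_apply]; ring⟩
  · intro A V' X h
    have h1 : V * (V.adjugate * A * V') = V * ((E ^ 3) • X) := by rw [h]
    rw [mul_assoc V.adjugate, ← mul_assoc, Matrix.mul_adjugate, hV, Matrix.smul_mul,
      Matrix.mul_smul, one_mul] at h1
    have h2 : (E ^ 3) • ((ε : S) • (A * V')) = (E ^ 3) • (V * X) := by
      rw [smul_smul, mul_comm]
      exact h1
    have h3 := hcancel 3 _ _ h2
    calc A * V' = ((ε⁻¹ : Sˣ) : S) • ((ε : S) • (A * V')) := by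
          rw [smul_smul, Units.inv_mul, one_smul]
      _ = ((ε⁻¹ : Sˣ) : S) • (V * X) := by rw [h3]
end

section
/- Let p be a prime, e = p − 1, and let a_0, a_1, a_2 be integers with 0 < a_1 − a_0, 0 < a_2 − a_1 and a_2 − a_0 < e; for 0 ≤ i, j ≤ 2 let [a_i − a_j] denote the unique integer in {0, …, e−1} congruent to −(a_i − a_j) modulo e. Let O = ℤ_p, S = O[[u]], and E(u) = u^e + p ∈ S. Let W be the 3×3 lower triangular unipotent matrix over S with W_{00} = W_{11} = W_{22} = 1, W_{10} = u^{[a_1−a_0]}·w_{10}, W_{21} = u^{[a_2−a_1]}·w_{21}, W_{20} = u^{[a_2−a_0]}·w_{20}, and zero entries above the diagonal, where w_{10}, w_{21} ∈ O and w_{20} ∈ O + E(u)·O. Then the adjugate adj(W) is again lower triangular unipotent of the same form: adj(W)_{10} = u^{[a_1−a_0]}·w'_{10}, adj(W)_{21} = u^{[a_2−a_1]}·w'_{21}, adj(W)_{20} = u^{[a_2−a_0]}·w'_{20} with w'_{10}, w'_{21} ∈ O and w'_{20} ∈ O + E(u)·O. -/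
/-!
Since `0 < a_i - a_j < e` for `i > j`, the bracket `[a_i - a_j]` equals `e - (a_i - a_j)`, so
`[a_1 - a_0] + [a_2 - a_1] = e + [a_2 - a_0]`. The adjugate of a lower unitriangular matrix has
corner entry `W₁₀ W₂₁ - W₂₀ = u^{[a_2 - a_0]} (u^e w₁₀ w₂₁ - w₂₀)`, and `u^e = E(u) - p` puts
`u^e w₁₀ w₂₁ - w₂₀` back into `O + E(u) O`.
-/

open PowerSeries

theorem Matrix.adjugate_lowerUnitriangular_fin_three {R : Type*} [CommRing R] (x y z : R) :
    (!![1, 0, 0; x, 1, 0; z, y, 1] : Matrix (Fin 3) (Fin 3) R).adjugate =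
      !![1, 0, 0; -x, 1, 0; x * y - z, -y, 1] := by
  rw [Matrix.adjugate_fin_three]
  ext i j
  fin_cases i <;> fin_cases j <;> simp

theorem Int.add_eq_of_dvd_add_of_lt {e b x : ℤ} (hb0 : 0 ≤ b) (hb : b < e) (hx0 : 0 < x)
    (hx : x < e) (hd : e ∣ b + x) : b + x = e := by
  obtain ⟨k, hk⟩ := hd
  have hk1 : k = 1 := by nlinarith
  rw [hk, hk1, mul_one]

theorem PowerSeries.X_pow_mul_C_sub_C_add_mul_C {R : Type*} [CommRing R] (e : ℕ) (π w c d : R) :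
    X ^ e * C w - (C c + (X ^ e + C π) * C d) = C (-(c + π * w)) + (X ^ e + C π) * C (w - d) := by
  simp only [map_neg, map_add, map_mul, map_sub]
  ring

/-- The adjugate of a lower triangular unipotent `3×3` matrix with descent data over
`S = ℤ_p[[u]]` whose subdiagonal coefficients `w_{10}, w_{21}` are constants and whose
corner coefficient `w_{20}` lies in `ℤ_p + E(u)·ℤ_p` (`E(u) = u^e + p`, `e = p - 1`) is
again of the same shape. -/
theorem adjugate_unipotent_descent_data
    (p : ℕ) [hp : Fact p.Prime]
    (a : Fin 3 → ℤ)
    (ha01 : 0 < a 1 - a 0) (ha12 : 0 < a 2 - a 1) (ha02 : a 2 - a 0 < (p : ℤ) - 1)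
    (br : Fin 3 → Fin 3 → ℕ)
    (hbr : ∀ i j, br i j < p - 1 ∧ ((p : ℤ) - 1) ∣ ((br i j : ℤ) + (a i - a j)))
    (w10 w21 : ℤ_[p]) (w20 : PowerSeries ℤ_[p])
    (hw20 : ∃ c d : ℤ_[p],
      w20 = C (R := ℤ_[p]) c + (X ^ (p - 1) + C (R := ℤ_[p]) (p : ℤ_[p])) * C (R := ℤ_[p]) d)
    (W : Matrix (Fin 3) (Fin 3) (PowerSeries ℤ_[p]))
    (hW : W = !![1, 0, 0;
                 X ^ br 1 0 * C (R := ℤ_[p]) w10, 1, 0;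
                 X ^ br 2 0 * w20, X ^ br 2 1 * C (R := ℤ_[p]) w21, 1]) :
    ∃ (w10' w21' : ℤ_[p]) (w20' : PowerSeries ℤ_[p]),
      (∃ c d : ℤ_[p],
        w20' = C (R := ℤ_[p]) c + (X ^ (p - 1) + C (R := ℤ_[p]) (p : ℤ_[p])) * C (R := ℤ_[p]) d) ∧
      W.adjugate = !![1, 0, 0;
                 X ^ br 1 0 * C (R := ℤ_[p]) w10', 1, 0;
                 X ^ br 2 0 * w20', X ^ br 2 1 * C (R := ℤ_[p]) w21', 1] := by
  obtain ⟨c, d, rfl⟩ := hw20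
  have hsum (i j : Fin 3) (hij : 0 < a i - a j) (hlt : a i - a j < p - 1) :
      (br i j : ℤ) + (a i - a j) = p - 1 :=
    Int.add_eq_of_dvd_add_of_lt (by positivity) (by have := (hbr i j).1; omega) hij hlt (hbr i j).2
  have hexp : br 1 0 + br 2 1 = br 2 0 + (p - 1) := by
    have := hsum 1 0 ha01 (by omega)
    have := hsum 2 1 ha12 (by omega)
    have := hsum 2 0 (by omega) ha02
    omega
  have hcorner : X ^ br 1 0 * C w10 * (X ^ br 2 1 * C w21) =
      X ^ br 2 0 * (X ^ (p - 1) * C (w10 * w21)) := by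
    calc _ = X ^ (br 1 0 + br 2 1) * C (w10 * w21) := by rw [pow_add, map_mul]; ring
      _ = _ := by rw [hexp, pow_add]; ring
  refine ⟨-w10, -w21, _, ⟨-(c + p * (w10 * w21)), w10 * w21 - d, rfl⟩, ?_⟩
  rw [hW, Matrix.adjugate_lowerUnitriangular_fin_three, hcorner, ← mul_sub,
    X_pow_mul_C_sub_C_add_mul_C]
  simp only [map_neg, mul_neg]
end
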